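/- Fix a positive integer k > 2 and an integer n with k-1 < n ≤ k(k-1)/2. Then D_k^e(n) - D_k^o(n) = P_e^{(k)}(d,n) - P_o^{(k)}(d,n), where D_k^e(n) (resp. D_k^o(n)) counts partitions of n into non-negative parts with smallest part of multiplicity exactly k and all other parts distinct, with an even (resp. odd) number of parts exceeding the smallest part; and P_e^{(k)}(d,n) (resp. P_o^{(k)}(d,n)) counts partitions of n into an even (resp. odd) number of distinct positive parts each at most k-1. -/

import Mathlib

/-- `DcountE k n`: partitions of `n` into non-negative parts (multisets of naturals
summing to `n`, `0` allowed) whose smallest part occurs exactly `k` times, all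
other parts distinct, and with an even number of parts exceeding the smallest. -/
noncomputable def DcountE (k n : ℕ) : ℕ :=
  Set.ncard {M : Multiset ℕ | M.sum = n ∧
    ∃ s ∈ M, (∀ x ∈ M, s ≤ x) ∧ M.count s = k ∧
      (∀ x ∈ M, x ≠ s → M.count x = 1) ∧
      Even (M.filter (fun x => s < x)).card}

/-- `DcountO k n`: same with an odd number of parts exceeding the smallest. -/
noncomputable def DcountO (k n : ℕ) : ℕ :=
  Set.ncard {M : Multiset ℕ | M.sum = n ∧
    ∃ s ∈ M, (∀ x ∈ M, s ≤ x) ∧ M.count s = k ∧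
      (∀ x ∈ M, x ≠ s → M.count x = 1) ∧
      Odd (M.filter (fun x => s < x)).card}

/-- `PE k n`: partitions of `n` into an even number of distinct positive parts,
each at most `k - 1`. -/
noncomputable def PE (k n : ℕ) : ℕ :=
  Set.ncard {p : Nat.Partition n | p.parts.Nodup ∧ (∀ x ∈ p.parts, x ≤ k - 1) ∧
    Even p.parts.card}

/-- `PO k n`: partitions of `n` into an odd number of distinct positive parts,
each at most `k - 1`. -/
noncomputable def PO (k n : ℕ) : ℕ :=
  Set.ncard {p : Nat.Partition n | p.parts.Nodup ∧ (∀ x ∈ p.parts, x ≤ k - 1) ∧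
    Odd p.parts.card}

open Finset

def Obj (k n c : ℕ) : Finset (ℕ × Finset ℕ × Finset ℕ) :=
  ((Finset.range (n+1)) ×ˢ ((Finset.range (n+1)).powerset ×ˢ (Finset.range (n+1)).powerset)).filter
    (fun p => c * p.1 + (∑ x ∈ p.2.1, x) + (∑ x ∈ p.2.2, x) = n ∧
      (∀ x ∈ p.2.1, p.1 < x ∧ x ≤ k-1) ∧ (∀ x ∈ p.2.2, c ≤ x))

def wt (p : ℕ × Finset ℕ × Finset ℕ) : ℤ := (-1)^(p.2.1.card + p.2.2.card)

def Q (k n c : ℕ) : ℤ := ∑ p ∈ Obj k n c, wt p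

lemma mem_Obj {k n c : ℕ} (hc : 1 ≤ c) {p : ℕ × Finset ℕ × Finset ℕ} :
    p ∈ Obj k n c ↔ (c * p.1 + (∑ x ∈ p.2.1, x) + (∑ x ∈ p.2.2, x) = n ∧
      (∀ x ∈ p.2.1, p.1 < x ∧ x ≤ k-1) ∧ (∀ x ∈ p.2.2, c ≤ x)) := by
  obtain ⟨s, L, H⟩ := p
  simp only [Obj, Finset.mem_filter, Finset.mem_product, Finset.mem_powerset,
    Finset.mem_range]
  constructor
  · rintro ⟨-, h⟩; exact h
  · rintro ⟨hsum, hL, hH⟩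
    refine ⟨⟨?_, ?_, ?_⟩, hsum, hL, hH⟩
    · have : c * s ≤ n := by omega
      have : s ≤ c * s := Nat.le_mul_of_pos_left s hc
      omega
    · intro x hx
      have : x ≤ ∑ y ∈ L, y := Finset.single_le_sum (f := fun y => y) (fun i _ => Nat.zero_le i) hx
      simp only [Finset.mem_range]; omega
    · intro x hx
      have : x ≤ ∑ y ∈ H, y := Finset.single_le_sum (f := fun y => y) (fun i _ => Nat.zero_le i) hx
      simp only [Finset.mem_range]; omega

def Dp (c : ℕ) (p : ℕ × Finset ℕ × Finset ℕ) : Prop :=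
  (c ∈ p.2.2 ∧ p.1+1 ∈ p.2.1) ∨ (p.1 = 0 ∧ c ∉ p.2.2)

def survp (p : ℕ × Finset ℕ × Finset ℕ) : Prop := p.1 = 0 ∧ p.2.2 = ∅

instance (c : ℕ) : DecidablePred (Dp c) := fun p => by unfold Dp; infer_instance
instance : DecidablePred survp := fun p => by unfold survp; infer_instance

lemma two_n_le {k n : ℕ} (h2 : n ≤ k*(k-1)/2) : 2*n ≤ k*(k-1) := by
  have := Nat.div_mul_le_self (k*(k-1)) 2
  omega

lemma s_bound {k n c s : ℕ} (hk : 2 < k) (h2 : n ≤ k*(k-1)/2) (hc : k ≤ c)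
    (hs : c * s ≤ n) : s + 1 ≤ k - 1 := by
  have h2n : 2*n ≤ k*(k-1) := two_n_le h2
  have h1 : k * s ≤ c * s := Nat.mul_le_mul_right s hc
  have h3 : k * (2*s) ≤ k * (k-1) := by
    calc k * (2*s) = 2 * (k*s) := by ring
    _ ≤ 2 * n := by omega
    _ ≤ k*(k-1) := h2n
  have h4 : 2*s ≤ k-1 := Nat.le_of_mul_le_mul_left h3 (by omega)
  omega


def phi (c : ℕ) (p : ℕ × Finset ℕ × Finset ℕ) : ℕ × Finset ℕ × Finset ℕ :=
  if c ∈ p.2.2 then (p.1+1, p.2.1, p.2.2.erase c) else (p.1-1, p.2.1, insert c p.2.2)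

lemma phi_mem {k n c : ℕ} (hc : 1 ≤ c) {p : ℕ × Finset ℕ × Finset ℕ}
    (hp : p ∈ (Obj k n c).filter (fun p => ¬ Dp c p)) :
    phi c p ∈ (Obj k n c).filter (fun p => ¬ Dp c p) := by
  obtain ⟨s, L, H⟩ := p
  simp only [Finset.mem_filter] at hp ⊢
  obtain ⟨hmem, hnd⟩ := hp
  rw [mem_Obj hc] at hmem
  obtain ⟨hsum, hL, hH⟩ := hmem
  simp only at hsum hL hH
  by_cases hcH : c ∈ H
  · have hsL : s + 1 ∉ L := fun h => hnd (Or.inl ⟨hcH, h⟩)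
    unfold phi
    simp only [hcH, if_pos]
    constructor
    · rw [mem_Obj hc]
      refine ⟨?_, ?_, ?_⟩
      · simp only
        have herase : c + ∑ x ∈ H.erase c, x = ∑ x ∈ H, x :=
          Finset.add_sum_erase H (fun x => x) hcH
        have hmul : c * (s+1) = c * s + c := by ring
        rw [hmul]
        omega
      · intro x hx
        simp only at hx ⊢
        have := hL x hx
        have hne : x ≠ s + 1 := fun h => hsL (h ▸ hx)
        omega
      · intro x hx
        exact hH x (Finset.mem_of_mem_erase hx)
    · unfold Dp
      simp only
      push_neg
      exact ⟨fun hc' => absurd hc' (Finset.notMem_erase c H), fun h => by omega⟩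
  · have hs : s ≠ 0 := fun h0 => hnd (Or.inr ⟨h0, hcH⟩)
    unfold phi
    simp only [hcH, if_neg, not_false_iff]
    constructor
    · rw [mem_Obj hc]
      refine ⟨?_, ?_, ?_⟩
      · simp only
        rw [Finset.sum_insert hcH]
        obtain ⟨u, rfl⟩ : ∃ u, s = u + 1 := ⟨s - 1, by omega⟩
        simp only [Nat.add_sub_cancel]
        have : c * (u+1) = c * u + c := by ring
        omega
      · intro x hx
        have := hL x hx
        simp only at this ⊢
        omega
      · intro x hx
        simp only at hx ⊢
        rcases Finset.mem_insert.1 hx with h | h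
        · omega
        · exact hH x h
    · unfold Dp
      simp only
      push_neg
      constructor
      · intro _
        have h1 : s - 1 + 1 = s := by omega
        rw [h1]
        intro hsL
        exact absurd (hL s hsL).1 (lt_irrefl s)
      · intro h
        exact Finset.mem_insert_self c H

lemma phi_invol {k n c : ℕ} (hc : 1 ≤ c) {p : ℕ × Finset ℕ × Finset ℕ}
    (hp : p ∈ (Obj k n c).filter (fun p => ¬ Dp c p)) :
    phi c (phi c p) = p := by
  obtain ⟨s, L, H⟩ := p
  simp only [Finset.mem_filter] at hp
  obtain ⟨hmem, hnd⟩ := hp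
  rw [mem_Obj hc] at hmem
  obtain ⟨hsum, hL, hH⟩ := hmem
  by_cases hcH : c ∈ H
  · unfold phi
    simp only [hcH, if_pos, Finset.notMem_erase, if_neg, not_false_iff]
    simp only [Nat.add_sub_cancel, Finset.insert_erase hcH]
  · have hs : s ≠ 0 := fun h0 => hnd (Or.inr ⟨h0, hcH⟩)
    unfold phi
    simp only [hcH, if_neg, not_false_iff, Finset.mem_insert_self, if_pos]
    rw [Finset.erase_insert hcH]
    have h1 : s - 1 + 1 = s := by omega
    rw [h1]

lemma phi_wt {c : ℕ} {p : ℕ × Finset ℕ × Finset ℕ} :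
    wt p + wt (phi c p) = 0 := by
  obtain ⟨s, L, H⟩ := p
  by_cases hcH : c ∈ H
  · unfold phi
    simp only [hcH, if_pos]
    have hcard : L.card + (H.erase c).card + 1 = L.card + H.card := by
      rw [Finset.card_erase_of_mem hcH]
      have : 0 < H.card := Finset.card_pos.2 ⟨c, hcH⟩
      omega
    show wt (s,L,H) + wt (s+1, L, H.erase c) = 0
    unfold wt
    simp only
    rw [← hcard, pow_succ]
    ring
  · unfold phi
    simp only [hcH, if_neg, not_false_iff]
    show wt (s,L,H) + wt (s-1, L, insert c H) = 0
    unfold wt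
    simp only
    rw [Finset.card_insert_of_notMem hcH]
    rw [show L.card + (H.card + 1) = (L.card + H.card) + 1 by ring, pow_succ]
    ring

lemma phi_ne {c : ℕ} {p : ℕ × Finset ℕ × Finset ℕ} : phi c p ≠ p := by
  obtain ⟨s, L, H⟩ := p
  unfold phi
  by_cases hcH : c ∈ H
  · simp only [hcH, if_pos]
    intro heq
    have := congrArg Prod.fst heq
    simp at this
  · simp only [hcH, if_neg, not_false_iff]
    intro heq
    have h2 := congrArg (fun q => q.2.2) heq
    simp only at h2
    exact hcH (h2 ▸ Finset.mem_insert_self c H)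

lemma inv_sum_zero (k n c : ℕ) (hc : 1 ≤ c) :
    ∑ p ∈ (Obj k n c).filter (fun p => ¬ Dp c p), wt p = 0 :=
  Finset.sum_involution (fun p _ => phi c p) (fun _ _ => phi_wt)
    (fun _ _ _ => phi_ne) (fun _ ha => phi_mem hc ha) (fun _ ha => phi_invol hc ha)

lemma bij_sum (k n c : ℕ) (hk : 2 < k) (h2 : n ≤ k*(k-1)/2) (hc : k ≤ c) :
    ∑ p ∈ ((Obj k n c).filter (Dp c)).filter (fun p => ¬ survp p), wt p
      = ∑ p ∈ (Obj k n (c+1)).filter (fun p => ¬ survp p), wt p := by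
  have hc1 : (1:ℕ) ≤ c := by omega
  have hc1' : (1:ℕ) ≤ c + 1 := by omega
  apply Finset.sum_nbij'
    (i := fun p => if c ∈ p.2.2 then (p.1+1, p.2.1.erase (p.1+1), p.2.2.erase c) else p)
    (j := fun q => if q.1 = 0 then q else (q.1 - 1, insert q.1 q.2.1, insert c q.2.2))
  · -- i maps S into T
    rintro ⟨s, L, H⟩ hp
    simp only [Finset.mem_filter] at hp ⊢
    obtain ⟨⟨hObj, hD⟩, hns⟩ := hp
    rw [mem_Obj hc1] at hObj
    obtain ⟨hsum, hL, hH⟩ := hObj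
    simp only at hsum hL hH hns
    by_cases hcH : c ∈ H
    · have hsL : s + 1 ∈ L := by
        rcases hD with ⟨-, h⟩ | ⟨-, h⟩
        · exact h
        · exact absurd hcH h
      simp only [hcH, if_pos]
      refine ⟨?_, ?_⟩
      · rw [mem_Obj hc1']
        refine ⟨?_, ?_, ?_⟩
        · simp only
          have he1 : (s+1) + ∑ x ∈ L.erase (s+1), x = ∑ x ∈ L, x :=
            Finset.add_sum_erase L (fun x => x) hsL
          have he2 : c + ∑ x ∈ H.erase c, x = ∑ x ∈ H, x :=
            Finset.add_sum_erase H (fun x => x) hcH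
          have hmul : (c+1) * (s+1) = c*s + c + s + 1 := by ring
          linarith
        · intro x hx
          simp only at hx ⊢
          obtain ⟨hne, hxL⟩ := Finset.mem_erase.1 hx
          have := hL x hxL
          omega
        · intro x hx
          simp only at hx ⊢
          obtain ⟨hne, hxH⟩ := Finset.mem_erase.1 hx
          have := hH x hxH
          omega
      · unfold survp
        simp only
        omega
    · have hs0 : s = 0 := by
        rcases hD with ⟨h, -⟩ | ⟨h, -⟩
        · exact absurd h hcH
        · exact h
      simp only [hcH, if_neg, not_false_iff]
      refine ⟨?_, ?_⟩
      · rw [mem_Obj hc1']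
        refine ⟨?_, ?_, ?_⟩
        · simp only [hs0] at hsum ⊢
          simp only [Nat.mul_zero] at hsum ⊢
          omega
        · exact hL
        · intro x hx
          have := hH x hx
          have : x ≠ c := fun h => hcH (h ▸ hx)
          have := hH x hx
          omega
      · unfold survp at hns ⊢
        simp only at hns ⊢
        intro h
        exact hns ⟨hs0, h.2⟩
  · -- j maps T into S
    rintro ⟨t, L, H⟩ hq
    simp only [Finset.mem_filter] at hq ⊢
    obtain ⟨hObj, hns⟩ := hq
    rw [mem_Obj hc1'] at hObj
    obtain ⟨hsum, hL, hH⟩ := hObj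
    simp only at hsum hL hH hns
    have hcH : c ∉ H := fun h => by have := hH c h; omega
    by_cases ht : t = 0
    · subst ht
      simp only [if_pos]
      refine ⟨⟨?_, ?_⟩, ?_⟩
      · rw [mem_Obj hc1]
        refine ⟨?_, ?_, ?_⟩
        · simp only [Nat.mul_zero] at hsum ⊢
          omega
        · exact hL
        · intro x hx
          have := hH x hx
          simp only at hx ⊢
          omega
      · exact Or.inr ⟨rfl, hcH⟩
      · unfold survp at hns ⊢
        intro h
        exact hns ⟨rfl, h.2⟩
    · simp only [ht, if_neg, not_false_iff]
      have htL : t ∉ L := fun h => by have := (hL t h).1; omega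
      have htk : t + 1 ≤ k - 1 := s_bound hk h2 (by omega : k ≤ c + 1) (by omega)
      obtain ⟨u, rfl⟩ : ∃ u, t = u + 1 := ⟨t - 1, by omega⟩
      simp only [Nat.add_sub_cancel]
      refine ⟨⟨?_, ?_⟩, ?_⟩
      · rw [mem_Obj hc1]
        refine ⟨?_, ?_, ?_⟩
        · simp only
          rw [Finset.sum_insert htL, Finset.sum_insert hcH]
          have hmul : (c+1) * (u+1) = c*u + c + u + 1 := by ring
          linarith
        · intro x hx
          simp only at hx ⊢
          rcases Finset.mem_insert.1 hx with h | h
          · omega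
          · have := hL x h
            omega
        · intro x hx
          simp only at hx ⊢
          rcases Finset.mem_insert.1 hx with h | h
          · omega
          · have := hH x h
            omega
      · exact Or.inl ⟨Finset.mem_insert_self c H, Finset.mem_insert_self (u+1) L⟩
      · unfold survp
        simp only
        intro h
        exact absurd h.2 (Finset.insert_ne_empty c H)
  · -- left inverse
    rintro ⟨s, L, H⟩ hp
    simp only [Finset.mem_filter] at hp
    obtain ⟨⟨hObj, hD⟩, hns⟩ := hp
    rw [mem_Obj hc1] at hObj
    obtain ⟨hsum, hL, hH⟩ := hObj
    by_cases hcH : c ∈ H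
    · have hsL : s + 1 ∈ L := by
        rcases hD with ⟨-, h⟩ | ⟨-, h⟩
        · exact h
        · exact absurd hcH h
      simp only [hcH, if_pos]
      simp only [Nat.succ_ne_zero, if_neg, not_false_iff, Nat.add_sub_cancel]
      rw [Finset.insert_erase hsL, Finset.insert_erase hcH]
    · have hs0 : s = 0 := by
        rcases hD with ⟨h, -⟩ | ⟨h, -⟩
        · exact absurd h hcH
        · exact h
      simp only [hcH, if_neg, not_false_iff, hs0, if_pos]
  · -- right inverse
    rintro ⟨t, L, H⟩ hq
    simp only [Finset.mem_filter] at hq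
    obtain ⟨hObj, hns⟩ := hq
    rw [mem_Obj hc1'] at hObj
    obtain ⟨hsum, hL, hH⟩ := hObj
    have hcH : c ∉ H := fun h => by have := hH c h; omega
    by_cases ht : t = 0
    · simp only [ht, if_pos, hcH, if_neg, not_false_iff]
    · simp only [ht, if_neg, not_false_iff]
      have htL : t ∉ L := fun h => by have := (hL t h).1; simp only at this; omega
      simp only [Finset.mem_insert_self, if_pos]
      rw [Finset.erase_insert hcH]
      have h1 : t - 1 + 1 = t := by omega
      rw [h1, Finset.erase_insert htL]
  · -- weights
    rintro ⟨s, L, H⟩ hp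
    simp only [Finset.mem_filter] at hp
    obtain ⟨⟨hObj, hD⟩, hns⟩ := hp
    rw [mem_Obj hc1] at hObj
    obtain ⟨hsum, hL, hH⟩ := hObj
    by_cases hcH : c ∈ H
    · have hsL : s + 1 ∈ L := by
        rcases hD with ⟨-, h⟩ | ⟨-, h⟩
        · exact h
        · exact absurd hcH h
      simp only [hcH, if_pos]
      show wt (s, L, H) = wt (s+1, L.erase (s+1), H.erase c)
      unfold wt
      simp only
      rw [Finset.card_erase_of_mem hsL, Finset.card_erase_of_mem hcH]
      have hLc : 0 < L.card := Finset.card_pos.2 ⟨s+1, hsL⟩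
      have hHc : 0 < H.card := Finset.card_pos.2 ⟨c, hcH⟩
      have : (L.card - 1) + (H.card - 1) + 2 = L.card + H.card := by omega
      rw [← this, pow_add]
      norm_num
    · simp only [hcH, if_neg, not_false_iff]

lemma surv_filter_eq (k n c : ℕ) (hc : 1 ≤ c) :
    ((Obj k n c).filter (Dp c)).filter survp = (Obj k n (c+1)).filter survp := by
  ext ⟨s, L, H⟩
  simp only [Finset.mem_filter]
  constructor
  · rintro ⟨⟨hObj, hD⟩, hsv⟩
    obtain ⟨hs0, hHe⟩ := hsv
    simp only at hs0 hHe
    subst hs0; subst hHe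
    rw [mem_Obj hc] at hObj
    refine ⟨?_, rfl, rfl⟩
    rw [mem_Obj (by omega)]
    obtain ⟨hsum, hL, hH⟩ := hObj
    simp only [Nat.mul_zero] at hsum ⊢
    exact ⟨hsum, hL, by simp⟩
  · rintro ⟨hObj, hsv⟩
    obtain ⟨hs0, hHe⟩ := hsv
    simp only at hs0 hHe
    subst hs0; subst hHe
    rw [mem_Obj (by omega : (1:ℕ) ≤ c+1)] at hObj
    obtain ⟨hsum, hL, hH⟩ := hObj
    refine ⟨⟨?_, Or.inr ⟨rfl, by simp⟩⟩, rfl, rfl⟩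
    rw [mem_Obj hc]
    simp only [Nat.mul_zero] at hsum ⊢
    exact ⟨hsum, hL, by simp⟩

lemma Q_step (k n c : ℕ) (hk : 2 < k) (h2 : n ≤ k*(k-1)/2) (hc : k ≤ c) :
    Q k n c = Q k n (c+1) := by
  have hc1 : (1:ℕ) ≤ c := by omega
  have e1 : Q k n c = (∑ p ∈ (Obj k n c).filter (Dp c), wt p)
      + ∑ p ∈ (Obj k n c).filter (fun p => ¬ Dp c p), wt p :=
    (Finset.sum_filter_add_sum_filter_not _ _ _).symm
  rw [e1, inv_sum_zero k n c hc1, add_zero]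
  have e2 : (∑ p ∈ (Obj k n c).filter (Dp c), wt p)
      = (∑ p ∈ ((Obj k n c).filter (Dp c)).filter survp, wt p)
      + ∑ p ∈ ((Obj k n c).filter (Dp c)).filter (fun p => ¬ survp p), wt p :=
    (Finset.sum_filter_add_sum_filter_not _ _ _).symm
  have e3 : Q k n (c+1) = (∑ p ∈ (Obj k n (c+1)).filter survp, wt p)
      + ∑ p ∈ (Obj k n (c+1)).filter (fun p => ¬ survp p), wt p :=
    (Finset.sum_filter_add_sum_filter_not _ _ _).symm
  rw [e2, e3, surv_filter_eq k n c hc1, bij_sum k n c hk h2 hc]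

lemma Q_const (k n c : ℕ) (hk : 2 < k) (h2 : n ≤ k*(k-1)/2) (hc : k ≤ c) :
    Q k n k = Q k n c := by
  induction c, hc using Nat.le_induction with
  | base => rfl
  | succ m hm ih => rw [ih, Q_step k n m hk h2 hm]

def FE (k n : ℕ) : Finset (Finset ℕ) :=
  ((Finset.range (n+1)).powerset).filter
    (fun L => (∑ x ∈ L, x) = n ∧ ∀ x ∈ L, 0 < x ∧ x ≤ k-1)

lemma Q_top (k n : ℕ) (hk : 2 < k) :
    Q k n (n+1) = ∑ L ∈ FE k n, (-1:ℤ)^L.card := by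
  unfold Q
  apply Finset.sum_nbij' (i := fun p => p.2.1) (j := fun L => ((0:ℕ), L, (∅ : Finset ℕ)))
  · rintro ⟨s, L, H⟩ hp
    rw [mem_Obj (by omega)] at hp
    obtain ⟨hsum, hL, hH⟩ := hp
    simp only at hsum hL hH
    have hs0 : s = 0 := by
      by_contra h
      have : n + 1 ≤ (n+1) * s := Nat.le_mul_of_pos_right (n+1) (by omega)
      omega
    have hH0 : H = ∅ := by
      rw [Finset.eq_empty_iff_forall_notMem]
      intro x hx
      have h1 := hH x hx
      have h2 : x ≤ ∑ y ∈ H, y :=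
        Finset.single_le_sum (f := fun y => y) (fun i _ => Nat.zero_le i) hx
      omega
    subst hs0; subst hH0
    simp only [FE, Finset.mem_filter, Finset.mem_powerset]
    refine ⟨?_, ?_, ?_⟩
    · intro x hx
      have h2 : x ≤ ∑ y ∈ L, y :=
        Finset.single_le_sum (f := fun y => y) (fun i _ => Nat.zero_le i) hx
      simp only [Finset.mem_range]
      omega
    · simp only [Finset.sum_empty, Nat.mul_zero] at hsum
      omega
    · intro x hx
      have := hL x hx
      omega
  · intro L hL
    simp only [FE, Finset.mem_filter, Finset.mem_powerset] at hL
    obtain ⟨hsub, hsum, hparts⟩ := hL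
    rw [mem_Obj (by omega)]
    refine ⟨?_, ?_, ?_⟩
    · simp only [Finset.sum_empty, Nat.mul_zero]
      omega
    · intro x hx
      have := hparts x hx
      simp only
      omega
    · intro x hx
      exact absurd hx (Finset.notMem_empty x)
  · rintro ⟨s, L, H⟩ hp
    rw [mem_Obj (by omega)] at hp
    obtain ⟨hsum, hL, hH⟩ := hp
    simp only at hsum hL hH
    have hs0 : s = 0 := by
      by_contra h
      have : n + 1 ≤ (n+1) * s := Nat.le_mul_of_pos_right (n+1) (by omega)
      omega
    have hH0 : H = ∅ := by
      rw [Finset.eq_empty_iff_forall_notMem]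
      intro x hx
      have h1 := hH x hx
      have h2 : x ≤ ∑ y ∈ H, y :=
        Finset.single_le_sum (f := fun y => y) (fun i _ => Nat.zero_le i) hx
      omega
    simp [hs0, hH0]
  · intro L hL
    rfl
  · rintro ⟨s, L, H⟩ hp
    rw [mem_Obj (by omega)] at hp
    obtain ⟨hsum, hL, hH⟩ := hp
    simp only at hsum hL hH
    have hSig : (∑ y ∈ H, y) ≤ n := by
      have := Nat.zero_le ((n+1)*s)
      have := Nat.zero_le (∑ x ∈ L, x)
      omega
    have hH0 : H = ∅ := by
      rw [Finset.eq_empty_iff_forall_notMem]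
      intro x hx
      have h1 := hH x hx
      have h2 : x ≤ ∑ y ∈ H, y :=
        Finset.single_le_sum (f := fun y => y) (fun i _ => Nat.zero_le i) hx
      omega
    unfold wt
    simp [hH0]

lemma P_card (k n : ℕ) (Par : ℕ → Prop) [DecidablePred Par] :
    {p : Nat.Partition n | p.parts.Nodup ∧ (∀ x ∈ p.parts, x ≤ k - 1) ∧ Par p.parts.card}.ncard
      = ((FE k n).filter (fun L => Par L.card)).card := by
  set S := {p : Nat.Partition n | p.parts.Nodup ∧ (∀ x ∈ p.parts, x ≤ k - 1) ∧ Par p.parts.card}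
  have hinj : Set.InjOn (fun p : Nat.Partition n => p.parts.toFinset) S := by
    rintro p₁ hp₁ p₂ hp₂ heq
    simp only at heq
    apply Nat.Partition.ext
    have e₁ : p₁.parts.toFinset.val = p₁.parts := by
      rw [Multiset.toFinset_val, Multiset.dedup_eq_self.2 hp₁.1]
    have e₂ : p₂.parts.toFinset.val = p₂.parts := by
      rw [Multiset.toFinset_val, Multiset.dedup_eq_self.2 hp₂.1]
    rw [← e₁, ← e₂, heq]
  have himg : (fun p : Nat.Partition n => p.parts.toFinset) '' S
      = ↑((FE k n).filter (fun L => Par L.card)) := by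
    ext L
    constructor
    · rintro ⟨p, hp, rfl⟩
      obtain ⟨hnd, hle, hpar⟩ := hp
      have e₁ : p.parts.toFinset.val = p.parts := by
        rw [Multiset.toFinset_val, Multiset.dedup_eq_self.2 hnd]
      have hsum : (∑ x ∈ p.parts.toFinset, x) = n := by
        rw [Finset.sum, Multiset.map_id', e₁, p.parts_sum]
      have hcard : p.parts.toFinset.card = Multiset.card p.parts := by
        show Multiset.card p.parts.toFinset.val = _
        rw [e₁]
      simp only [Finset.coe_filter, Set.mem_setOf_eq, FE, Finset.mem_filter,
        Finset.mem_powerset]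
      refine ⟨⟨?_, hsum, ?_⟩, ?_⟩
      · intro x hx
        rw [Multiset.mem_toFinset] at hx
        have h1 : x ≤ p.parts.sum :=
          Multiset.single_le_sum (fun y _ => Nat.zero_le y) x hx
        rw [p.parts_sum] at h1
        simp only [Finset.mem_range]
        omega
      · intro x hx
        rw [Multiset.mem_toFinset] at hx
        exact ⟨p.parts_pos hx, hle x hx⟩
      · rw [hcard]
        exact hpar
    · intro hL
      simp only [Finset.coe_filter, Set.mem_setOf_eq, FE, Finset.mem_filter,
        Finset.mem_powerset] at hL
      obtain ⟨⟨hsub, hsum, hparts⟩, hpar⟩ := hL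
      have hsum' : L.val.sum = n := by
        rw [← hsum, Finset.sum, Multiset.map_id']
      refine ⟨⟨L.val, fun {i} hi => (hparts i hi).1, hsum'⟩, ⟨?_, ?_, ?_⟩, ?_⟩
      · exact L.nodup
      · intro x hx
        exact (hparts x hx).2
      · exact hpar
      · exact Finset.val_toFinset L
  rw [← Set.ncard_image_of_injOn hinj, himg, Set.ncard_coe_finset]

lemma parity_sum (X : Finset (Finset ℕ)) :
    ∑ L ∈ X, (-1:ℤ)^L.card
      = ((X.filter (fun L => Even L.card)).card : ℤ)
        - ((X.filter (fun L => Odd L.card)).card : ℤ) := by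
  rw [← Finset.sum_filter_add_sum_filter_not X (fun L => Even L.card)]
  have h1 : ∑ L ∈ X.filter (fun L => Even L.card), (-1:ℤ)^L.card
      = ((X.filter (fun L => Even L.card)).card : ℤ) := by
    rw [Finset.sum_congr rfl (fun L hL => (Finset.mem_filter.1 hL).2.neg_one_pow)]
    simp
  have h2 : ∑ L ∈ X.filter (fun L => ¬ Even L.card), (-1:ℤ)^L.card
      = -((X.filter (fun L => Odd L.card)).card : ℤ) := by
    have hpred : X.filter (fun L => ¬ Even L.card) = X.filter (fun L => Odd L.card) := by
      apply Finset.filter_congr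
      intro L _
      exact Nat.not_even_iff_odd
    rw [hpred]
    rw [Finset.sum_congr rfl (fun L hL => (Finset.mem_filter.1 hL).2.neg_one_pow)]
    simp
  rw [h1, h2]
  ring

lemma FE_sum (k n : ℕ) : ∑ L ∈ FE k n, (-1:ℤ)^L.card = (PE k n : ℤ) - (PO k n : ℤ) := by
  rw [parity_sum]
  have hPE : PE k n = ((FE k n).filter (fun L => Even L.card)).card := P_card k n Even
  have hPO : PO k n = ((FE k n).filter (fun L => Odd L.card)).card := P_card k n Odd
  rw [hPE, hPO]

def fD (k : ℕ) (p : ℕ × Finset ℕ × Finset ℕ) : Multiset ℕ :=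
  Multiset.replicate k p.1 + (p.2.1 ∪ p.2.2).val

lemma obj_facts {k n : ℕ} (hk : 2 < k) (h2 : n ≤ k*(k-1)/2) {s : ℕ} {L H : Finset ℕ}
    (hp : (s,L,H) ∈ Obj k n k) :
    s < k ∧ Disjoint L H ∧ s ∉ L ∪ H ∧ (∀ x ∈ L ∪ H, s < x) ∧
      k * s + (∑ x ∈ L ∪ H, x) = n := by
  rw [mem_Obj (by omega)] at hp
  obtain ⟨hsum, hL, hH⟩ := hp
  simp only at hsum hL hH
  have hsk : s < k := by
    have := s_bound hk h2 (le_refl k) (by omega : k * s ≤ n)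
    omega
  have hdisj : Disjoint L H := by
    rw [Finset.disjoint_left]
    intro x hxL hxH
    have := (hL x hxL).2
    have := hH x hxH
    omega
  have hmem : ∀ x ∈ L ∪ H, s < x := by
    intro x hx
    rcases Finset.mem_union.1 hx with h | h
    · exact (hL x h).1
    · have := hH x h
      omega
  refine ⟨hsk, hdisj, fun h => lt_irrefl s (hmem s h), hmem, ?_⟩
  rw [Finset.sum_union hdisj]
  omega

lemma fD_sum {k : ℕ} {s : ℕ} {L H : Finset ℕ} :
    (fD k (s,L,H)).sum = k * s + ∑ x ∈ L ∪ H, x := by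
  unfold fD
  rw [Multiset.sum_add, Multiset.sum_replicate, smul_eq_mul, Finset.sum, Multiset.map_id']

lemma fD_count_s {k : ℕ} {s : ℕ} {L H : Finset ℕ} (hs : s ∉ L ∪ H) :
    (fD k (s,L,H)).count s = k := by
  unfold fD
  rw [Multiset.count_add, Multiset.count_replicate, if_pos rfl,
    Multiset.count_eq_zero.2 (by simpa using hs), add_zero]

lemma fD_mem {k : ℕ} {s x : ℕ} {L H : Finset ℕ} (hk : 0 < k) :
    x ∈ fD k (s,L,H) ↔ x = s ∨ x ∈ L ∪ H := by
  unfold fD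
  simp only [Multiset.mem_add, Multiset.mem_replicate, Finset.mem_val]
  constructor
  · rintro (⟨-, h⟩ | h)
    · exact Or.inl h
    · exact Or.inr h
  · rintro (h | h)
    · exact Or.inl ⟨by omega, h⟩
    · exact Or.inr h

lemma fD_count_other {k : ℕ} {s x : ℕ} {L H : Finset ℕ} (hx : x ≠ s) (hxU : x ∈ L ∪ H) :
    (fD k (s,L,H)).count x = 1 := by
  unfold fD
  rw [Multiset.count_add, Multiset.count_replicate, if_neg (fun h => hx h.symm),
    Multiset.count_eq_one_of_mem (L ∪ H).nodup (by simpa using hxU)]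

lemma fD_filter {k : ℕ} {s : ℕ} {L H : Finset ℕ} (hmem : ∀ x ∈ L ∪ H, s < x) :
    (fD k (s,L,H)).filter (fun x => s < x) = (L ∪ H).val := by
  unfold fD
  rw [Multiset.filter_add]
  rw [Multiset.filter_eq_nil.2 (fun a ha => by
    rw [Multiset.eq_of_mem_replicate ha]; omega)]
  rw [Multiset.filter_eq_self.2 (fun a ha => hmem a (Finset.mem_def.2 ha))]
  simp

lemma D_card (k n : ℕ) (hk : 2 < k) (h2 : n ≤ k*(k-1)/2) (Par : ℕ → Prop)
    [DecidablePred Par] :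
    {M : Multiset ℕ | M.sum = n ∧ ∃ s ∈ M, (∀ x ∈ M, s ≤ x) ∧ M.count s = k ∧
      (∀ x ∈ M, x ≠ s → M.count x = 1) ∧ Par (Multiset.card (M.filter (fun x => s < x)))}.ncard
    = ((Obj k n k).filter (fun p => Par (p.2.1.card + p.2.2.card))).card := by
  set T := (Obj k n k).filter (fun p => Par (p.2.1.card + p.2.2.card)) with hT
  have hinj : Set.InjOn (fD k) ↑T := by
    rintro ⟨s, L, H⟩ hp ⟨s', L', H'⟩ hp' heq
    simp only [hT, Finset.coe_filter, Set.mem_setOf_eq] at hp hp'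
    obtain ⟨hs, hd, hsU, hm, hsum⟩ := obj_facts hk h2 hp.1
    obtain ⟨hs', hd', hsU', hm', hsum'⟩ := obj_facts hk h2 hp'.1
    have hcs : s = s' := by
      by_contra hne
      have h1 : (fD k (s,L,H)).count s = k := fD_count_s hsU
      have h2' : (fD k (s',L',H')).count s ≤ 1 := by
        unfold fD
        rw [Multiset.count_add, Multiset.count_replicate, if_neg (fun h => hne h.symm),
          zero_add]
        by_cases hmem : s ∈ (L' ∪ H').val
        · rw [Multiset.count_eq_one_of_mem (L' ∪ H').nodup hmem]
        · rw [Multiset.count_eq_zero.2 hmem]; omega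
      rw [heq] at h1
      omega
    subst hcs
    have hU : L ∪ H = L' ∪ H' := by
      have : (L ∪ H).val = (L' ∪ H').val := by
        have := heq
        unfold fD at this
        simpa using add_left_cancel this
      exact Finset.val_inj.1 this
    rw [mem_Obj (by omega : (1:ℕ) ≤ k)] at hp hp'
    obtain ⟨-, hL, hH⟩ := hp.1
    obtain ⟨-, hL', hH'⟩ := hp'.1
    simp only at hL hH hL' hH'
    have hLL : L = L' := by
      have e1 : L = (L ∪ H).filter (fun x => x ≤ k-1) := by
        rw [Finset.filter_union, Finset.filter_true_of_mem (fun x hx => (hL x hx).2),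
          Finset.filter_false_of_mem (fun x hx => by have := hH x hx; omega),
          Finset.union_empty]
      have e2 : L' = (L' ∪ H').filter (fun x => x ≤ k-1) := by
        rw [Finset.filter_union, Finset.filter_true_of_mem (fun x hx => (hL' x hx).2),
          Finset.filter_false_of_mem (fun x hx => by have := hH' x hx; omega),
          Finset.union_empty]
      rw [e1, e2, hU]
    have hHH : H = H' := by
      have e1 : H = (L ∪ H).filter (fun x => ¬ x ≤ k-1) := by
        rw [Finset.filter_union, Finset.filter_false_of_mem
            (fun x hx => by have := (hL x hx).2; omega),
          Finset.filter_true_of_mem (fun x hx => by have := hH x hx; omega),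
          Finset.empty_union]
      have e2 : H' = (L' ∪ H').filter (fun x => ¬ x ≤ k-1) := by
        rw [Finset.filter_union, Finset.filter_false_of_mem
            (fun x hx => by have := (hL' x hx).2; omega),
          Finset.filter_true_of_mem (fun x hx => by have := hH' x hx; omega),
          Finset.empty_union]
      rw [e1, e2, hU]
    rw [hLL, hHH]
  have himg : fD k '' ↑T
      = {M : Multiset ℕ | M.sum = n ∧ ∃ s ∈ M, (∀ x ∈ M, s ≤ x) ∧ M.count s = k ∧
        (∀ x ∈ M, x ≠ s → M.count x = 1) ∧
        Par (Multiset.card (M.filter (fun x => s < x)))} := by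
    ext M
    constructor
    · rintro ⟨⟨s, L, H⟩, hp, rfl⟩
      simp only [hT, Finset.coe_filter, Set.mem_setOf_eq] at hp
      obtain ⟨hpObj, hpar⟩ := hp
      obtain ⟨hs, hd, hsU, hm, hsum⟩ := obj_facts hk h2 hpObj
      refine ⟨by rw [fD_sum]; exact hsum, s, ?_, ?_, fD_count_s hsU, ?_, ?_⟩
      · rw [fD_mem (by omega)]
        exact Or.inl rfl
      · intro x hx
        rcases (fD_mem (by omega)).1 hx with h | h
        · omega
        · exact le_of_lt (hm x h)
      · intro x hx hxs
        rcases (fD_mem (by omega)).1 hx with h | h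
        · exact absurd h hxs
        · exact fD_count_other hxs h
      · rw [fD_filter hm]
        have : Multiset.card (L ∪ H).val = L.card + H.card := by
          show (L ∪ H).card = _
          exact Finset.card_union_of_disjoint hd
        rw [this]
        exact hpar
    · rintro ⟨hsum, s, hsM, hmin, hcount, hone, hpar⟩
      set Tf := M.toFinset.erase s with hTf
      set L := Tf.filter (fun x => x ≤ k-1) with hLdef
      set H := Tf.filter (fun x => ¬ x ≤ k-1) with hHdef
      have hLH : L ∪ H = Tf := Finset.filter_union_filter_not_eq _ Tf
      have hsTf : s ∉ Tf := Finset.notMem_erase s _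
      have hTf_mem : ∀ x, x ∈ Tf ↔ (x ∈ M ∧ x ≠ s) := by
        intro x
        rw [hTf, Finset.mem_erase, Multiset.mem_toFinset]
        tauto
      have hMrepr : M = Multiset.replicate k s + Tf.val := by
        ext x
        rw [Multiset.count_add, Multiset.count_replicate]
        by_cases hxs : x = s
        · subst hxs
          rw [if_pos rfl, Multiset.count_eq_zero.2 (fun hx => hsTf (Finset.mem_def.2 hx)),
            add_zero, hcount]
        · rw [if_neg (fun h => hxs h.symm), zero_add]
          by_cases hxM : x ∈ M
          · rw [hone x hxM hxs, Multiset.count_eq_one_of_mem Tf.nodup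
              (Finset.mem_def.1 ((hTf_mem x).2 ⟨hxM, hxs⟩))]
          · rw [Multiset.count_eq_zero.2 hxM, Eq.comm, Multiset.count_eq_zero]
            intro hx
            exact hxM ((hTf_mem x).1 (Finset.mem_def.2 hx)).1
      have hTfgt : ∀ x ∈ Tf, s < x := by
        intro x hx
        obtain ⟨hxM, hxs⟩ := (hTf_mem x).1 hx
        have := hmin x hxM
        omega
      have hMfD : M = fD k (s, L, H) := by
        unfold fD
        simp only
        rw [hLH, hMrepr]
      refine ⟨(s, L, H), ?_, hMfD.symm⟩
      simp only [hT, Finset.coe_filter, Set.mem_setOf_eq]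
      have hsumTf : k * s + (∑ x ∈ Tf, x) = n := by
        have : M.sum = k * s + ∑ x ∈ Tf, x := by
          rw [hMfD, fD_sum, hLH]
        omega
      constructor
      · rw [mem_Obj (by omega : (1:ℕ) ≤ k)]
        refine ⟨?_, ?_, ?_⟩
        · simp only
          have : (∑ x ∈ L, x) + (∑ x ∈ H, x) = ∑ x ∈ Tf, x := by
            rw [hLdef, hHdef]
            exact Finset.sum_filter_add_sum_filter_not Tf _ _
          omega
        · intro x hx
          simp only at hx
          rw [hLdef, Finset.mem_filter] at hx
          exact ⟨hTfgt x hx.1, hx.2⟩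
        · intro x hx
          simp only at hx
          rw [hHdef, Finset.mem_filter] at hx
          have := hx.2
          omega
      · have hfil : Multiset.card (M.filter (fun x => s < x)) = L.card + H.card := by
          rw [hMfD, fD_filter (by rw [hLH]; exact hTfgt)]
          show (L ∪ H).card = _
          apply Finset.card_union_of_disjoint
          rw [hLdef, hHdef]
          exact Finset.disjoint_filter_filter_not Tf Tf _
        rw [← hfil]
        exact hpar
  rw [← himg, Set.ncard_image_of_injOn hinj, Set.ncard_coe_finset]

lemma Q_parity (k n : ℕ) : Q k n k
    = (((Obj k n k).filter (fun p => Even (p.2.1.card + p.2.2.card))).card : ℤ)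
      - (((Obj k n k).filter (fun p => Odd (p.2.1.card + p.2.2.card))).card : ℤ) := by
  unfold Q
  rw [← Finset.sum_filter_add_sum_filter_not (Obj k n k)
    (fun p => Even (p.2.1.card + p.2.2.card))]
  have h1 : ∑ p ∈ (Obj k n k).filter (fun p => Even (p.2.1.card + p.2.2.card)), wt p
      = (((Obj k n k).filter (fun p => Even (p.2.1.card + p.2.2.card))).card : ℤ) := by
    rw [Finset.sum_congr rfl (fun p hp => (Finset.mem_filter.1 hp).2.neg_one_pow)]
    simp
  have h2 : ∑ p ∈ (Obj k n k).filter (fun p => ¬ Even (p.2.1.card + p.2.2.card)), wt p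
      = -(((Obj k n k).filter (fun p => Odd (p.2.1.card + p.2.2.card))).card : ℤ) := by
    have hpred : (Obj k n k).filter (fun p => ¬ Even (p.2.1.card + p.2.2.card))
        = (Obj k n k).filter (fun p => Odd (p.2.1.card + p.2.2.card)) := by
      apply Finset.filter_congr
      intro p _
      exact Nat.not_even_iff_odd
    rw [hpred]
    rw [Finset.sum_congr rfl (fun p hp => (Finset.mem_filter.1 hp).2.neg_one_pow)]
    simp
  rw [h1, h2]
  ring


/-- For `k > 2` and `k-1 < n ≤ k(k-1)/2`:
`D_k^e(n) - D_k^o(n) = P_e^{(k)}(d,n) - P_o^{(k)}(d,n)`. -/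
theorem D_diff_eq_P_diff (k n : ℕ) (hk : 2 < k) (h1 : k - 1 < n)
    (h2 : n ≤ k * (k - 1) / 2) :
    (DcountE k n : ℤ) - DcountO k n = (PE k n : ℤ) - PO k n := by
  have hE : DcountE k n
      = ((Obj k n k).filter (fun p => Even (p.2.1.card + p.2.2.card))).card :=
    D_card k n hk h2 Even
  have hO : DcountO k n
      = ((Obj k n k).filter (fun p => Odd (p.2.1.card + p.2.2.card))).card :=
    D_card k n hk h2 Odd
  rw [hE, hO, ← Q_parity k n, Q_const k n (n+1) hk h2 (by omega), Q_top k n hk, FE_sum]
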